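/- arXiv:1309.2201 — 2 statements merged into one kernel-verified Lean document; each statement's English description precedes it below -/
import Mathlib

section
/- Let G be a connected simple graph with root r. The degree of any parking function P for G is at most g = |E| - |V| + 1, the circuit rank of G. -/
open Finset

namespace PFG

variable {n : ℕ}

/-- `deg_{Sᶜ}(i)`: the number of edges `{i,j}` of `G` with `j ∉ S`. -/
noncomputable def sDeg (G : SimpleGraph (Fin (n+1))) (S : Finset (Fin (n+1))) (i : Fin (n+1)) : ℕ :=
  Set.ncard {j : Fin (n+1) | G.Adj i j ∧ j ∉ S}

/-- `P` is a parking function for `G` with respect to the root `r`: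
for every nonempty `S ⊆ V \ {r}` there is `i ∈ S` with `P i < deg_{Sᶜ}(i)`. -/
def IsParkingFunction (G : SimpleGraph (Fin (n+1))) (r : Fin (n+1))
    (P : Fin (n+1) → ℕ) : Prop :=
  ∀ S : Finset (Fin (n+1)), S.Nonempty → r ∉ S → ∃ i ∈ S, P i < sDeg G S i

/-- The degree of a parking function: the sum of its values over non-root vertices. -/
def degPF (r : Fin (n+1)) (P : Fin (n+1) → ℕ) : ℕ := ∑ v ∈ univ.erase r, P v

/-- A spanning tree of `G` rooted at `r`, encoded by its parent function:
each non-root vertex is adjacent (in `G`) to its parent, and iterating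
the parent map from any vertex reaches the root. -/
structure RootedSpanningTree (G : SimpleGraph (Fin (n+1))) (r : Fin (n+1)) where
  parent : Fin (n+1) → Fin (n+1)
  parent_root : parent r = r
  adj_parent : ∀ v, v ≠ r → G.Adj (parent v) v
  reaches_root : ∀ v, ∃ k, parent^[k] v = r

/-- `i` is a (proper) ancestor of `j` in the rooted tree with parent map `par`. -/
def IsAncestor (par : Fin (n+1) → Fin (n+1)) (i j : Fin (n+1)) : Prop :=
  ∃ k, 0 < k ∧ par^[k] j = i

/-- An inversion: `i` is an ancestor of `j` and `i > j`. -/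
def IsInversion (par : Fin (n+1) → Fin (n+1)) (i j : Fin (n+1)) : Prop :=
  IsAncestor par i j ∧ j < i

/-- A κ-inversion: an inversion `(i,j)` such that moreover `i` is not the
root and the parent of `i` is adjacent to `j` in `G`. -/
def IsKappaInversion (G : SimpleGraph (Fin (n+1))) (r : Fin (n+1))
    (par : Fin (n+1) → Fin (n+1)) (i j : Fin (n+1)) : Prop :=
  IsAncestor par i j ∧ j < i ∧ i ≠ r ∧ G.Adj (par i) j

/-- the κ-number: the number of κ-inversions. -/
noncomputable def kappaNum (G : SimpleGraph (Fin (n+1))) (r : Fin (n+1))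
    (par : Fin (n+1) → Fin (n+1)) : ℕ :=
  Set.ncard {p : Fin (n+1) × Fin (n+1) | IsKappaInversion G r par p.1 p.2}

/-- the number of inversions. -/
noncomputable def invNum (par : Fin (n+1) → Fin (n+1)) : ℕ :=
  Set.ncard {p : Fin (n+1) × Fin (n+1) | IsInversion par p.1 p.2}

open Classical in
/-- The neighbors of `i` in `G`, listed in decreasing order. -/
noncomputable def nbrs (G : SimpleGraph (Fin (n+1))) (i : Fin (n+1)) : List (Fin (n+1)) :=
  ((univ.filter (fun j => G.Adj i j)).sort (· ≤ ·)).reverse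

/-- One step of depth-first search from vertex `i`: scan the neighbors of `i`
in decreasing order; each unvisited neighbor `j` is visited, gets parent `i`,
and the search recurses from `j`.  The state is the pair
(visited vertices, parent map). -/
noncomputable def dfsStep (G : SimpleGraph (Fin (n+1))) :
    ℕ → Fin (n+1) → Finset (Fin (n+1)) × (Fin (n+1) → Fin (n+1)) →
      Finset (Fin (n+1)) × (Fin (n+1) → Fin (n+1))
  | 0, _, st => st
  | (fuel+1), i, st =>
      (nbrs G i).foldl
        (fun st j =>
          if j ∈ st.1 then st
          else dfsStep G fuel j (insert j st.1, Function.update st.2 j i)) st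

/-- The parent map of the depth-first search tree of `G` rooted at `r`,
visiting neighbors in decreasing numerical order. -/
noncomputable def dfsParent (G : SimpleGraph (Fin (n+1))) (r : Fin (n+1)) :
    Fin (n+1) → Fin (n+1) :=
  (dfsStep G (n+1) r ({r}, fun _ => r)).2

/-- The set of edges of the rooted tree given by parent map `par`. -/
def treeEdges (r : Fin (n+1)) (par : Fin (n+1) → Fin (n+1)) : Set (Sym2 (Fin (n+1))) :=
  {e | ∃ v, v ≠ r ∧ e = s(par v, v)}

end PFG

lemma pfg_key {n : ℕ} (G : SimpleGraph (Fin (n+1))) [DecidableRel G.Adj] (r : Fin (n+1))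
    (P : Fin (n+1) → ℕ) (hP : PFG.IsParkingFunction G r P) :
    ∀ S : Finset (Fin (n+1)), r ∉ S →
      ∑ v ∈ S, (P v + 1) ≤ (G.edgeFinset.filter (fun e => ∃ v ∈ S, v ∈ e)).card := by
  intro S
  induction S using Finset.strongInduction with
  | _ S ih =>
    intro hr
    rcases S.eq_empty_or_nonempty with rfl | hS
    · simp
    obtain ⟨i, hiS, hdeg⟩ := hP S hS hr
    have hir : i ≠ r := fun h => hr (h ▸ hiS)
    set S' := S.erase i with hS'
    have hsub : S' ⊂ S := Finset.erase_ssubset hiS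
    have hrS' : r ∉ S' := fun h => hr (Finset.mem_of_mem_erase h)
    have hIH := ih S' hsub hrS'
    -- the finset of neighbors of i outside S
    set F : Finset (Fin (n+1)) := Finset.univ.filter (fun j => G.Adj i j ∧ j ∉ S) with hF
    have hsdeg : PFG.sDeg G S i = F.card := by
      rw [PFG.sDeg, ← Set.ncard_coe_finset]
      congr 1
      ext j
      simp [hF]
    set T : Finset (Sym2 (Fin (n+1))) :=
      G.edgeFinset.filter (fun e => ∃ v ∈ S, v ∈ e) with hT
    set T' : Finset (Sym2 (Fin (n+1))) :=
      G.edgeFinset.filter (fun e => ∃ v ∈ S', v ∈ e) with hT'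
    have himage : F.image (fun j => s(i, j)) ⊆ T \ T' := by
      intro e he
      simp only [Finset.mem_image] at he
      obtain ⟨j, hj, rfl⟩ := he
      simp only [hF, Finset.mem_filter, Finset.mem_univ, true_and] at hj
      obtain ⟨hadj, hjS⟩ := hj
      simp only [Finset.mem_sdiff, hT, hT', Finset.mem_filter,
        SimpleGraph.mem_edgeFinset, SimpleGraph.mem_edgeSet]
      refine ⟨⟨hadj, ⟨i, hiS, by simp⟩⟩, ?_⟩
      rintro ⟨-, v, hv, hve⟩
      rcases Sym2.mem_iff.mp hve with rfl | rfl
      · exact (Finset.notMem_erase v S) hv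
      · exact hjS (Finset.mem_of_mem_erase hv)
    have hinj : Set.InjOn (fun j => s(i, j)) F := by
      intro a ha b hb hab
      rcases Sym2.eq_iff.mp hab with ⟨-, h⟩ | ⟨-, h2⟩
      · exact h
      · have ha' : G.Adj i a := by
          simp only [hF, Finset.mem_coe, Finset.mem_filter] at ha; exact ha.2.1
        exact absurd h2.symm (G.ne_of_adj ha')
    have hcardF : F.card = (F.image (fun j => s(i, j))).card :=
      (Finset.card_image_of_injOn hinj).symm
    have hT'T : T' ⊆ T := by
      intro e he
      simp only [hT, hT', Finset.mem_filter] at he ⊢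
      exact ⟨he.1, he.2.imp (fun v hv => ⟨Finset.mem_of_mem_erase hv.1, hv.2⟩)⟩
    have hdisj : Disjoint (F.image (fun j => s(i, j))) T' := by
      refine Finset.disjoint_left.mpr (fun e he he' => ?_)
      exact (Finset.mem_sdiff.mp (himage he)).2 he'
    have hcards : F.card + T'.card ≤ T.card := by
      rw [hcardF, ← Finset.card_union_of_disjoint hdisj]
      apply Finset.card_le_card
      exact Finset.union_subset (himage.trans (Finset.sdiff_subset)) hT'T
    calc ∑ v ∈ S, (P v + 1) = (P i + 1) + ∑ v ∈ S', (P v + 1) := by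
          exact (Finset.add_sum_erase S (fun v => P v + 1) hiS).symm
      _ ≤ F.card + T'.card := by
          have : P i + 1 ≤ F.card := hsdeg ▸ hdeg
          exact Nat.add_le_add this hIH
      _ ≤ T.card := hcards

/-- The degree of any parking function for a connected graph `G` is at most
the circuit rank `g = |E| - |V| + 1` (stated additively: `deg P + |V| ≤ |E| + 1`). -/
theorem parking_function_degree_le_circuit_rank {n : ℕ}
    (G : SimpleGraph (Fin (n+1))) (hG : G.Connected) (r : Fin (n+1))
    (P : Fin (n+1) → ℕ) (hP : PFG.IsParkingFunction G r P) :
    PFG.degPF r P + (n + 1) ≤ G.edgeSet.ncard + 1 := by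
  classical
  have hkey := pfg_key G r P hP (Finset.univ.erase r) (Finset.notMem_erase r _)
  have hsum : ∑ v ∈ Finset.univ.erase r, (P v + 1) = PFG.degPF r P + n := by
    rw [Finset.sum_add_distrib, PFG.degPF]
    congr 1
    simp [Finset.card_erase_of_mem]
  have h2 : ∑ v ∈ Finset.univ.erase r, (P v + 1) ≤ G.edgeSet.ncard := by
    refine hkey.trans ?_
    rw [← SimpleGraph.coe_edgeFinset, Set.ncard_coe_finset]
    exact Finset.card_filter_le _ _
  rw [hsum] at h2
  omega
end

section
/- Let G be a connected simple graph on vertices {0,...,n} with root r, and let T be a spanning tree of G rooted at r. The number of κ-inversions of T equals the number of edges of G not in T, minus the number of edges {u,v} of G not in T such that neither endpoint is a proper ancestor in T of the other. Equivalently: the map sending each non-tree edge e = {i',j} of G (where i' is burnt before j in the DFS order of T) to the pair (i,j), with i the child of i' on the tree path from i' to j, is well-defined when T = DFS(G), and is a bijection onto the set of κ-inversions of DFS(G). -/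
open Finset

/-!
Sending a κ-inversion `(i, j)` to the edge `{par i, j}` is injective and hits exactly the non-tree
edges whose endpoints are comparable in the tree (`par i` is an ancestor of `j`); this holds for
any rooted tree. For the DFS tree it is onto: if `u` is a proper ancestor of `v` and `{u, v}` is
not a tree edge, let `i` be the child of `u` towards `v`. Since `u` scans its neighbours in
decreasing order and `v` was not discovered from `u` but below `i`, we get `v < i`. The DFS part
is an invariant of the search: for every vertex `a` on the current path, all neighbours of its
parent that are larger than `a` have already been visited.
-/

theorem Set.EqOn.iterate {α : Type*} {f g : α → α} {s : Set α} (hf : Set.MapsTo f s s)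
    (h : Set.EqOn g f s) (k : ℕ) : Set.EqOn g^[k] f^[k] s := by
  induction k with
  | zero => exact fun _ _ => rfl
  | succ k ih =>
    intro x hx
    rw [Function.iterate_succ_apply', Function.iterate_succ_apply', ih hx]
    exact h (hf.iterate k hx)

namespace PFG

variable {n : ℕ} {G : SimpleGraph (Fin (n+1))} {r : Fin (n+1)} {par : Fin (n+1) → Fin (n+1)}

def IsRootedAt (par : Fin (n+1) → Fin (n+1)) (r : Fin (n+1)) : Prop :=
  par r = r ∧ ∀ v, ∃ k, par^[k] v = r

def BackEdgesInverted (G : SimpleGraph (Fin (n+1))) (r : Fin (n+1))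
    (par : Fin (n+1) → Fin (n+1)) : Prop :=
  ∀ i v, IsAncestor par i v → i ≠ r → G.Adj (par i) v → v < i

namespace IsRootedAt

theorem iterate_root (h : IsRootedAt par r) (k : ℕ) : par^[k] r = r :=
  Function.iterate_fixed h.1 k

theorem eq_root_of_iterate_eq_self (h : IsRootedAt par r) {v : Fin (n+1)} {a : ℕ}
    (ha : 0 < a) (hv : par^[a] v = v) : v = r := by
  obtain ⟨k, hk⟩ := h.2 v
  have hle : k ≤ a * k := Nat.le_mul_of_pos_left k ha
  calc v = par^[a * k] v := by rw [Function.iterate_mul, Function.iterate_fixed hv]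
    _ = par^[a * k - k] (par^[k] v) := by
      rw [← Function.iterate_add_apply, Nat.sub_add_cancel hle]
    _ = r := by rw [hk, h.iterate_root]

theorem eq_root_of_mutual_isAncestor_parent (h : IsRootedAt par r) {i j : Fin (n+1)}
    (hij : IsAncestor par i (par j)) (hji : IsAncestor par j (par i)) : i = r := by
  obtain ⟨m, -, hm⟩ := hij
  obtain ⟨m', -, hm'⟩ := hji
  refine h.eq_root_of_iterate_eq_self (a := (m + 1) + (m' + 1)) (by omega) ?_
  rw [Function.iterate_add_apply, Function.iterate_succ_apply par m', hm',
    Function.iterate_succ_apply, hm]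

theorem eq_of_iterate_eq_of_parent_eq (h : IsRootedAt par r) {i j : Fin (n+1)} {d : ℕ}
    (hd : par^[d] i = j) (hpar : par i = par j) (hj : j ≠ r) : i = j := by
  rcases Nat.eq_zero_or_pos d with rfl | hpos
  · exact hd
  have hcyc : par^[d] (par i) = par i := by
    rw [← Function.iterate_succ_apply, Function.iterate_succ_apply', hd, hpar]
  have hroot := h.eq_root_of_iterate_eq_self hpos hcyc
  refine absurd ?_ hj
  rw [← hd, ← Nat.sub_add_cancel hpos, Function.iterate_add_apply, Function.iterate_one, hroot,
    h.iterate_root]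

theorem eq_of_isAncestor_of_parent_eq (h : IsRootedAt par r) {i i' j : Fin (n+1)}
    (hi : IsAncestor par i j) (hi' : IsAncestor par i' j) (hpar : par i = par i') (hir : i ≠ r)
    (hi'r : i' ≠ r) : i = i' := by
  obtain ⟨m, -, hm⟩ := hi
  obtain ⟨m', -, hm'⟩ := hi'
  rcases le_total m m' with hle | hle
  · refine h.eq_of_iterate_eq_of_parent_eq (d := m' - m) ?_ hpar hi'r
    rw [← hm, ← Function.iterate_add_apply, Nat.sub_add_cancel hle, hm']
  · refine (h.eq_of_iterate_eq_of_parent_eq (d := m - m') ?_ hpar.symm hir).symm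
    rw [← hm', ← Function.iterate_add_apply, Nat.sub_add_cancel hle, hm]

theorem exists_isAncestor_parent_eq (h : IsRootedAt par r) {u v : Fin (n+1)}
    (huv : IsAncestor par u v) (hne : par v ≠ u) :
    ∃ i, IsAncestor par i v ∧ par i = u ∧ i ≠ r := by
  classical
  obtain ⟨hpos, hk⟩ := Nat.find_spec huv
  set k := Nat.find huv
  have hk1 : k ≠ 1 := fun h1 => hne (by rwa [h1, Function.iterate_one] at hk)
  have hpar : par (par^[k - 1] v) = u := by
    rw [← Function.iterate_succ_apply' par, Nat.succ_eq_add_one, Nat.sub_add_cancel hpos, hk]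
  refine ⟨par^[k - 1] v, ⟨k - 1, by omega, rfl⟩, hpar, fun hroot => ?_⟩
  refine Nat.find_min huv (show k - 1 < k by omega) ⟨by omega, ?_⟩
  rw [← hpar, hroot, h.1]

end IsRootedAt

theorem IsAncestor.eq_root_of_parent_eq_root {a v : Fin (n+1)} (hr : par r = r)
    (hv : par v = r) (h : IsAncestor par a v) : a = r := by
  obtain ⟨k, hk, rfl⟩ := h
  rw [← Nat.sub_add_cancel hk, Function.iterate_add_apply, Function.iterate_one, hv,
    Function.iterate_fixed hr]

def nontreeEdges (G : SimpleGraph (Fin (n+1))) (r : Fin (n+1)) (par : Fin (n+1) → Fin (n+1)) :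
    Set (Sym2 (Fin (n+1))) :=
  {e | e ∈ G.edgeSet ∧ e ∉ treeEdges r par}

def unrelatedNontreeEdges (G : SimpleGraph (Fin (n+1))) (r : Fin (n+1))
    (par : Fin (n+1) → Fin (n+1)) : Set (Sym2 (Fin (n+1))) :=
  {e | e ∈ G.edgeSet ∧ e ∉ treeEdges r par ∧
    ∀ u v, e = s(u, v) → ¬ IsAncestor par u v ∧ ¬ IsAncestor par v u}

def kappaInversions (G : SimpleGraph (Fin (n+1))) (r : Fin (n+1))
    (par : Fin (n+1) → Fin (n+1)) : Set (Fin (n+1) × Fin (n+1)) :=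
  {p | IsKappaInversion G r par p.1 p.2}

theorem mapsTo_kappaInversions (h : IsRootedAt par r) :
    Set.MapsTo (fun p : Fin (n+1) × Fin (n+1) => s(par p.1, p.2)) (kappaInversions G r par)
      (nontreeEdges G r par \ unrelatedNontreeEdges G r par) := by
  rintro ⟨i, j⟩ ⟨hij, hji, hir, hadj⟩
  dsimp only at *
  obtain ⟨m, hm, hmj⟩ := hij
  refine ⟨⟨hadj, ?_⟩, fun hu => (hu.2.2 (par i) j rfl).1 ⟨m + 1, m.succ_pos, ?_⟩⟩
  · rintro ⟨v, -, hv⟩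
    rcases Sym2.eq_iff.mp hv with ⟨hpar, rfl⟩ | ⟨rfl, rfl⟩
    · exact hji.ne (h.eq_of_iterate_eq_of_parent_eq hmj hpar.symm hir)
    · refine hir (h.eq_root_of_iterate_eq_self (a := m + 2) (by omega) ?_)
      rw [Function.iterate_add_apply, Function.iterate_succ_apply, Function.iterate_one, hmj]
  · rw [Function.iterate_succ_apply', hmj]

theorem surjOn_kappaInversions (h : IsRootedAt par r) (hb : BackEdgesInverted G r par) :
    Set.SurjOn (fun p : Fin (n+1) × Fin (n+1) => s(par p.1, p.2)) (kappaInversions G r par)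
      (nontreeEdges G r par \ unrelatedNontreeEdges G r par) := by
  rintro e ⟨⟨he, hnt⟩, hrel⟩
  obtain ⟨u, v, rfl, huv⟩ : ∃ u v, e = s(u, v) ∧ IsAncestor par u v := by
    by_contra! hcon
    exact hrel ⟨he, hnt, fun u v huv => ⟨hcon u v huv, hcon v u (huv.trans Sym2.eq_swap)⟩⟩
  have hne : par v ≠ u := by
    rintro rfl
    refine hnt ⟨v, fun hv => ?_, rfl⟩
    subst hv
    exact G.loopless.irrefl _ (by rwa [h.1] at he)
  obtain ⟨i, hiv, rfl, hir⟩ := h.exists_isAncestor_parent_eq huv hne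
  exact ⟨(i, v), ⟨hiv, hb i v hiv hir he, hir, he⟩, rfl⟩

theorem injOn_kappaInversions (h : IsRootedAt par r) :
    Set.InjOn (fun p : Fin (n+1) × Fin (n+1) => s(par p.1, p.2)) (kappaInversions G r par) := by
  rintro ⟨i, j⟩ ⟨hij, -, hir, -⟩ ⟨i', j'⟩ ⟨hij', -, hi'r, -⟩ heq
  dsimp only at *
  rcases Sym2.eq_iff.mp heq with ⟨hpar, rfl⟩ | ⟨hi, hi'⟩
  · rw [h.eq_of_isAncestor_of_parent_eq hij hij' hpar hir hi'r]
  · subst hi hi'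
    exact absurd (h.eq_root_of_mutual_isAncestor_parent hij hij') hir

theorem kappaNum_add_ncard_unrelatedNontreeEdges (h : IsRootedAt par r)
    (hb : BackEdgesInverted G r par) :
    kappaNum G r par + (unrelatedNontreeEdges G r par).ncard = (nontreeEdges G r par).ncard := by
  have himage :=
    (mapsTo_kappaInversions (G := G) h).image_subset.antisymm (surjOn_kappaInversions h hb)
  rw [kappaNum, ← kappaInversions, ← (injOn_kappaInversions h).ncard_image, himage]
  exact Set.ncard_sdiff_add_ncard_of_subset fun e he => ⟨he.1, he.2.1⟩

abbrev DfsState (n : ℕ) := Finset (Fin (n+1)) × (Fin (n+1) → Fin (n+1))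

variable {st st' st'' : DfsState n}

def DfsState.Extends (st st' : DfsState n) : Prop :=
  st.1 ⊆ st'.1 ∧ Set.EqOn st'.2 st.2 st.1

theorem DfsState.Extends.refl (st : DfsState n) : st.Extends st :=
  ⟨subset_rfl, fun _ _ => rfl⟩

theorem DfsState.Extends.trans (h : st.Extends st') (h' : st'.Extends st'') : st.Extends st'' :=
  ⟨h.1.trans h'.1, fun _ hv => (h'.2 (h.1 hv)).trans (h.2 hv)⟩

structure DfsInv (G : SimpleGraph (Fin (n+1))) (r : Fin (n+1)) (st : DfsState n) : Prop where
  root_mem : r ∈ st.1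
  mapsTo : Set.MapsTo st.2 st.1 st.1
  parent_eq_root : ∀ v ∉ st.1, st.2 v = r
  rooted : IsRootedAt st.2 r
  backEdges : BackEdgesInverted G r st.2

def LargerSiblingsVisited (G : SimpleGraph (Fin (n+1))) (r i : Fin (n+1)) (st : DfsState n) :
    Prop :=
  ∀ m w, st.2^[m] i ≠ r → G.Adj (st.2 (st.2^[m] i)) w → st.2^[m] i < w → w ∈ st.1

theorem LargerSiblingsVisited.mono {i : Fin (n+1)} (hmaps : Set.MapsTo st.2 st.1 st.1)
    (hi : i ∈ st.1) (hst : st.Extends st') (h : LargerSiblingsVisited G r i st) :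
    LargerSiblingsVisited G r i st' := by
  intro m w hne hadj hlt
  have hmem := hmaps.iterate m hi
  rw [Set.EqOn.iterate hmaps hst.2 m hi] at hne hadj hlt
  rw [hst.2 hmem] at hadj
  exact hst.1 (h m w hne hadj hlt)

def visitFrom (i j : Fin (n+1)) (st : DfsState n) : DfsState n :=
  (insert j st.1, Function.update st.2 j i)

section visitFrom

variable {i j : Fin (n+1)}

theorem extends_visitFrom (hj : j ∉ st.1) : st.Extends (visitFrom i j st) :=
  ⟨Finset.subset_insert _ _, fun _ hv => Function.update_of_ne (ne_of_mem_of_not_mem hv hj) _ _⟩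

theorem visitFrom_parent_self : (visitFrom i j st).2 j = i := Function.update_self _ _ _

theorem iterate_visitFrom (h : DfsInv G r st) (hj : j ∉ st.1) {v : Fin (n+1)} (hv : v ∈ st.1)
    (m : ℕ) : (visitFrom i j st).2^[m] v = st.2^[m] v :=
  Set.EqOn.iterate h.mapsTo (extends_visitFrom hj).2 m hv

theorem iterate_succ_visitFrom_self (h : DfsInv G r st) (hi : i ∈ st.1) (hj : j ∉ st.1)
    (m : ℕ) : (visitFrom i j st).2^[m + 1] j = st.2^[m] i := by
  rw [Function.iterate_succ_apply, visitFrom_parent_self]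
  exact iterate_visitFrom h hj hi m

theorem isRootedAt_visitFrom (h : DfsInv G r st) (hi : i ∈ st.1) (hj : j ∉ st.1) :
    IsRootedAt (visitFrom i j st).2 r := by
  refine ⟨(extends_visitFrom hj).2 h.root_mem ▸ h.rooted.1, fun v => ?_⟩
  by_cases hv : v ∈ st.1
  · obtain ⟨k, hk⟩ := h.rooted.2 v
    exact ⟨k, (iterate_visitFrom h hj hv k).trans hk⟩
  by_cases hvj : v = j
  · obtain ⟨k, hk⟩ := h.rooted.2 i
    exact ⟨k + 1, hvj ▸ (iterate_succ_visitFrom_self h hi hj k).trans hk⟩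
  · exact ⟨1, (Function.update_of_ne hvj _ _).trans (h.parent_eq_root v hv)⟩

theorem backEdgesInverted_visitFrom (h : DfsInv G r st) (hi : i ∈ st.1) (hj : j ∉ st.1)
    (hs : LargerSiblingsVisited G r i st) : BackEdgesInverted G r (visitFrom i j st).2 := by
  rintro a v ⟨m, hm, rfl⟩ har hadj
  by_cases hv : v ∈ st.1
  · have hmem := h.mapsTo.iterate m hv
    rw [iterate_visitFrom h hj hv] at har hadj ⊢
    rw [(extends_visitFrom hj).2 hmem] at hadj
    exact h.backEdges _ v ⟨m, hm, rfl⟩ har hadj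
  by_cases hvj : v = j
  · subst hvj
    obtain ⟨m, rfl⟩ := Nat.exists_eq_add_one_of_ne_zero hm.ne'
    have hmem := h.mapsTo.iterate m hi
    rw [iterate_succ_visitFrom_self h hi hj] at har hadj ⊢
    rw [(extends_visitFrom hj).2 hmem] at hadj
    exact lt_of_le_of_ne (not_lt.mp fun hlt => hj (hs m v har hadj hlt))
      fun heq => hj (heq ▸ hmem)
  · have hroot : (visitFrom i j st).2 v = r :=
      (Function.update_of_ne hvj _ _).trans (h.parent_eq_root v hv)
    exact absurd (IsAncestor.eq_root_of_parent_eq_root (isRootedAt_visitFrom h hi hj).1 hroot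
      ⟨m, hm, rfl⟩) har

theorem dfsInv_visitFrom (h : DfsInv G r st) (hi : i ∈ st.1) (hj : j ∉ st.1)
    (hs : LargerSiblingsVisited G r i st) : DfsInv G r (visitFrom i j st) where
  root_mem := Finset.mem_insert_of_mem h.root_mem
  mapsTo v hv := by
    rcases Finset.mem_insert.mp hv with rfl | hv
    · rw [visitFrom_parent_self]; exact Finset.mem_insert_of_mem hi
    · rw [(extends_visitFrom hj).2 hv]; exact Finset.mem_insert_of_mem (h.mapsTo hv)
  parent_eq_root v hv := by
    rw [visitFrom, Finset.mem_insert, not_or] at hv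
    exact (Function.update_of_ne hv.1 _ _).trans (h.parent_eq_root v hv.2)
  rooted := isRootedAt_visitFrom h hi hj
  backEdges := backEdgesInverted_visitFrom h hi hj hs

theorem largerSiblingsVisited_visitFrom (h : DfsInv G r st) (hi : i ∈ st.1) (hj : j ∉ st.1)
    (hs : LargerSiblingsVisited G r i st) (hlarger : ∀ w, G.Adj i w → j < w → w ∈ st.1) :
    LargerSiblingsVisited G r j (visitFrom i j st) := by
  rintro (_ | m) w hne hadj hlt
  · rw [Function.iterate_zero_apply, visitFrom_parent_self] at hadj
    exact Finset.mem_insert_of_mem (hlarger w hadj hlt)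
  · have hmem := h.mapsTo.iterate m hi
    rw [iterate_succ_visitFrom_self h hi hj] at hne hadj hlt
    rw [(extends_visitFrom hj).2 hmem] at hadj
    exact Finset.mem_insert_of_mem (hs m w hne hadj hlt)

end visitFrom

theorem nbrs_pairwise (G : SimpleGraph (Fin (n+1))) (i : Fin (n+1)) :
    (nbrs G i).Pairwise (· ≥ ·) := by
  classical
  exact List.pairwise_reverse.mpr (Finset.pairwise_sort _ _)

theorem mem_nbrs {i w : Fin (n+1)} : w ∈ nbrs G i ↔ G.Adj i w := by
  classical
  simp [nbrs]

noncomputable def scan (G : SimpleGraph (Fin (n+1))) (fuel : ℕ) (i : Fin (n+1)) (st : DfsState n)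
    (j : Fin (n+1)) : DfsState n :=
  if j ∈ st.1 then st else dfsStep G fuel j (visitFrom i j st)

theorem dfsStep_succ (fuel : ℕ) (i : Fin (n+1)) (st : DfsState n) :
    dfsStep G (fuel + 1) i st = (nbrs G i).foldl (scan G fuel i) st := rfl

theorem extends_and_dfsInv_foldl_scan {fuel : ℕ} {i : Fin (n+1)}
    (ih : ∀ {j st}, DfsInv G r st → j ∈ st.1 → LargerSiblingsVisited G r j st →
      st.Extends (dfsStep G fuel j st) ∧ DfsInv G r (dfsStep G fuel j st))
    {L : List (Fin (n+1))} (hL : L.Pairwise (· ≥ ·)) (h : DfsInv G r st) (hi : i ∈ st.1)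
    (hs : LargerSiblingsVisited G r i st) (hcover : ∀ w, G.Adj i w → w ∈ L ∨ w ∈ st.1) :
    st.Extends (L.foldl (scan G fuel i) st) ∧ DfsInv G r (L.foldl (scan G fuel i) st) := by
  induction L generalizing st with
  | nil => exact ⟨.refl st, h⟩
  | cons j tl ihL =>
    obtain ⟨hj_ge, htl⟩ := List.pairwise_cons.mp hL
    have hcover' (st' : DfsState n) (hsub : st.1 ⊆ st'.1) (hj : j ∈ st'.1) :
        ∀ w, G.Adj i w → w ∈ tl ∨ w ∈ st'.1 := fun w hw =>
      (hcover w hw).elim (fun hw' => (List.mem_cons.mp hw').elim (fun h => .inr (h ▸ hj)) .inl)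
        (fun hw' => .inr (hsub hw'))
    rw [List.foldl_cons, scan]
    by_cases hj : j ∈ st.1
    · rw [if_pos hj]
      exact ihL htl h hi hs (hcover' st subset_rfl hj)
    rw [if_neg hj]
    -- `L` is decreasing, so the neighbours of `i` above `j` were scanned before `j`.
    have hlarger : ∀ w, G.Adj i w → j < w → w ∈ st.1 := fun w hw hlt =>
      (hcover w hw).resolve_left fun hw' => (List.mem_cons.mp hw').elim
        (fun h => (h ▸ hlt).false) (fun hw' => (hj_ge w hw').not_gt hlt)
    obtain ⟨he₃, h₃⟩ := ih (dfsInv_visitFrom h hi hj hs) (Finset.mem_insert_self j st.1)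
      (largerSiblingsVisited_visitFrom h hi hj hs hlarger)
    have he := (extends_visitFrom hj).trans he₃
    obtain ⟨he', h'⟩ := ihL htl h₃ (he.1 hi) (hs.mono h.mapsTo hi he)
      (hcover' _ he.1 (he₃.1 (Finset.mem_insert_self j st.1)))
    exact ⟨he.trans he', h'⟩

theorem extends_and_dfsInv_dfsStep (fuel : ℕ) {i : Fin (n+1)} {st : DfsState n}
    (h : DfsInv G r st) (hi : i ∈ st.1) (hs : LargerSiblingsVisited G r i st) :
    st.Extends (dfsStep G fuel i st) ∧ DfsInv G r (dfsStep G fuel i st) := by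
  induction fuel generalizing i st with
  | zero => exact ⟨.refl st, h⟩
  | succ fuel ih =>
    rw [dfsStep_succ]
    exact extends_and_dfsInv_foldl_scan ih (nbrs_pairwise G i) h hi hs
      fun w hw => .inl (mem_nbrs.mpr hw)

theorem dfsInv_init : DfsInv G r ({r}, fun _ => r) where
  root_mem := Finset.mem_singleton_self r
  mapsTo _ _ := Finset.mem_singleton_self r
  parent_eq_root _ _ := rfl
  rooted := ⟨rfl, fun _ => ⟨1, rfl⟩⟩
  backEdges _ _ ha har _ := (har (ha.eq_root_of_parent_eq_root rfl rfl)).elim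

theorem largerSiblingsVisited_init : LargerSiblingsVisited G r r ({r}, fun _ => r) :=
  fun m _ hne => absurd (Function.iterate_fixed rfl m) hne

theorem dfsInv_dfsParent : DfsInv G r (dfsStep G (n+1) r ({r}, fun _ => r)) :=
  (extends_and_dfsInv_dfsStep (n+1) dfsInv_init (Finset.mem_singleton_self r)
    largerSiblingsVisited_init).2

end PFG

theorem kappa_dfs_eq_nontree_minus_unrelated_general {n : ℕ}
    (G : SimpleGraph (Fin (n+1))) (r : Fin (n+1)) :
    PFG.kappaNum G r (PFG.dfsParent G r) +
      Set.ncard {e : Sym2 (Fin (n+1)) | e ∈ G.edgeSet ∧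
        e ∉ PFG.treeEdges r (PFG.dfsParent G r) ∧
        ∀ u v : Fin (n+1), e = s(u, v) →
          ¬ PFG.IsAncestor (PFG.dfsParent G r) u v ∧
          ¬ PFG.IsAncestor (PFG.dfsParent G r) v u} =
    Set.ncard {e : Sym2 (Fin (n+1)) | e ∈ G.edgeSet ∧
        e ∉ PFG.treeEdges r (PFG.dfsParent G r)} := by
  have h := PFG.dfsInv_dfsParent (G := G) (r := r)
  exact PFG.kappaNum_add_ncard_unrelatedNontreeEdges h.rooted h.backEdges

/-- For `T = DFS(G)`, the number of κ-inversions of `T` equals the number of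
edges of `G` not in `T` minus the number of non-tree edges `{u,v}` such that
neither endpoint is a proper ancestor of the other in `T` (stated additively). -/
theorem kappa_dfs_eq_nontree_minus_unrelated {n : ℕ}
    (G : SimpleGraph (Fin (n+1))) (hG : G.Connected) (r : Fin (n+1)) :
    PFG.kappaNum G r (PFG.dfsParent G r) +
      Set.ncard {e : Sym2 (Fin (n+1)) | e ∈ G.edgeSet ∧
        e ∉ PFG.treeEdges r (PFG.dfsParent G r) ∧
        ∀ u v : Fin (n+1), e = s(u, v) →
          ¬ PFG.IsAncestor (PFG.dfsParent G r) u v ∧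
          ¬ PFG.IsAncestor (PFG.dfsParent G r) v u} =
    Set.ncard {e : Sym2 (Fin (n+1)) | e ∈ G.edgeSet ∧
        e ∉ PFG.treeEdges r (PFG.dfsParent G r)} :=
  kappa_dfs_eq_nontree_minus_unrelated_general G r
end
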